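/- arXiv:1905.07339 — 8 statements merged into one kernel-verified Lean document; each statement's English description precedes it below -/
import Mathlib

section
/- For powers 0 < Pᵢ < Pⱼ and any channel gain g > 0, the smaller power is strictly better exactly above the threshold: u(Pᵢ; g) > u(Pⱼ; g) if and only if g > g₀*(Pᵢ, Pⱼ). -/
/-- The single-band energy-efficiency utility `u(p; g) = exp(−cσ²/(p g))/p`. -/
noncomputable def u (c σ2 p g : ℝ) : ℝ :=
  Real.exp (-(c * σ2) / (p * g)) / p

/-- The decisional threshold between two power decisions. -/
noncomputable def g0 (c σ2 Pi Pj : ℝ) : ℝ :=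
  c * σ2 * (1 / Pi - 1 / Pj) / (Real.log Pj - Real.log Pi)

/-!
Both utilities are positive, so compare their logarithms:
`log u(p; g) = -cσ²/(p g) - log p`. Hence `u(Pᵢ; g) > u(Pⱼ; g)` iff
`cσ²(1/Pᵢ - 1/Pⱼ)/g < log Pⱼ - log Pᵢ`, and since `log Pⱼ - log Pᵢ > 0` and `g > 0`
this rearranges to `g > g₀*(Pᵢ, Pⱼ)`.
-/

open Real

section

variable {c σ2 p q g : ℝ}

theorem u_pos (hp : 0 < p) : 0 < u c σ2 p g :=
  div_pos (exp_pos _) hp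

theorem log_u (hp : 0 < p) : log (u c σ2 p g) = -(c * σ2) / (p * g) - log p := by
  rw [u, log_div (exp_ne_zero _) hp.ne', log_exp]

theorem u_lt_u_iff (hp : 0 < p) (hq : 0 < q) :
    u c σ2 q g < u c σ2 p g ↔ -(c * σ2) / (q * g) - log q < -(c * σ2) / (p * g) - log p := by
  rw [← log_lt_log_iff (u_pos hq) (u_pos hp), log_u hp, log_u hq]

theorem g0_lt_iff {Pi Pj : ℝ} (hPi : 0 < Pi) (hij : Pi < Pj) (hg : 0 < g) :
    g0 c σ2 Pi Pj < g ↔ c * σ2 * (1 / Pi - 1 / Pj) / g < log Pj - log Pi := by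
  have hlog : 0 < log Pj - log Pi := sub_pos.2 (log_lt_log hPi hij)
  rw [g0, div_lt_iff₀ hlog, div_lt_iff₀ hg, mul_comm g]

end

theorem smaller_power_better_iff_general (c σ2 Pi Pj g : ℝ)
    (hPi : 0 < Pi) (hij : Pi < Pj) (hg : 0 < g) :
    u c σ2 Pi g > u c σ2 Pj g ↔ g > g0 c σ2 Pi Pj := by
  have hPj : 0 < Pj := hPi.trans hij
  have hsplit : c * σ2 * (1 / Pi - 1 / Pj) / g
      = -(c * σ2) / (Pj * g) - -(c * σ2) / (Pi * g) := by
    field_simp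
    ring
  rw [gt_iff_lt, gt_iff_lt, u_lt_u_iff hPi hPj, g0_lt_iff hPi hij hg, hsplit]
  constructor <;> intro h <;> linarith

/-- For powers `0 < Pᵢ < Pⱼ` and any channel gain `g > 0`, the smaller power is
strictly better exactly above the threshold:
`u(Pᵢ; g) > u(Pⱼ; g) ↔ g > g₀*(Pᵢ, Pⱼ)`. -/
theorem smaller_power_better_iff (c σ2 Pi Pj g : ℝ) (hc : 0 < c) (hσ2 : 0 < σ2)
    (hPi : 0 < Pi) (hij : Pi < Pj) (hg : 0 < g) :
    u c σ2 Pi g > u c σ2 Pj g ↔ g > g0 c σ2 Pi Pj :=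
  smaller_power_better_iff_general c σ2 Pi Pj g hPi hij hg
end

section
/- The decisional threshold is strictly decreasing in its first argument: for any 0 < P < P' < Pⱼ, one has g₀*(P, Pⱼ) > g₀*(P', Pⱼ). -/
lemma g0_hasDerivAt (c σ2 Pj x : ℝ) (hx : 0 < x) (hxj : x < Pj) :
    HasDerivAt (fun y => g0 c σ2 y Pj)
      ((c * σ2 * (-(x ^ 2)⁻¹) * (Real.log Pj - Real.log x)
        - c * σ2 * (1 / x - 1 / Pj) * (-x⁻¹)) / (Real.log Pj - Real.log x) ^ 2) x := by
  have hd : Real.log Pj - Real.log x ≠ 0 :=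
    sub_ne_zero.2 (Real.log_lt_log hx hxj).ne'
  have h1 : HasDerivAt (fun y : ℝ => c * σ2 * (1 / y - 1 / Pj))
      (c * σ2 * (-(x ^ 2)⁻¹)) x := by
    have := ((hasDerivAt_inv hx.ne').sub_const (1 / Pj)).const_mul (c * σ2)
    simpa [one_div] using this
  have h2 : HasDerivAt (fun y : ℝ => Real.log Pj - Real.log y) (-x⁻¹) x :=
    (Real.hasDerivAt_log hx.ne').const_sub (Real.log Pj)
  simpa [g0, Pi.div_def] using h1.div h2 hd

lemma g0_strictAntiOn (c σ2 Pj : ℝ) (hc : 0 < c) (hσ2 : 0 < σ2) (hPj : 0 < Pj) :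
    StrictAntiOn (fun x => g0 c σ2 x Pj) (Set.Ioo 0 Pj) := by
  apply strictAntiOn_of_deriv_neg (convex_Ioo 0 Pj)
  · apply ContinuousOn.congr (f := fun x => g0 c σ2 x Pj) ?_ (fun x hx => rfl)
    intro x hx
    exact ((g0_hasDerivAt c σ2 Pj x hx.1 hx.2).continuousAt).continuousWithinAt
  · intro x hx
    rw [interior_Ioo] at hx
    obtain ⟨hx0, hxj⟩ := hx
    rw [(g0_hasDerivAt c σ2 Pj x hx0 hxj).deriv]
    have hlog : Real.log x < Real.log Pj := Real.log_lt_log hx0 hxj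
    have hkey : Real.log (x / Pj) < x / Pj - 1 :=
      Real.log_lt_sub_one_of_pos (div_pos hx0 hPj) (by
        intro h
        have := (div_eq_one_iff_eq hPj.ne').1 h
        exact absurd this hxj.ne)
    rw [Real.log_div hx0.ne' hPj.ne'] at hkey
    have hnum : c * σ2 * (-(x ^ 2)⁻¹) * (Real.log Pj - Real.log x)
        - c * σ2 * (1 / x - 1 / Pj) * (-x⁻¹) < 0 := by
      have hx2 : (0:ℝ) < x ^ 2 := by positivity
      have h1 : 1 - x / Pj < Real.log Pj - Real.log x := by linarith
      have e1 : c * σ2 * (-(x ^ 2)⁻¹) * (Real.log Pj - Real.log x)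
          - c * σ2 * (1 / x - 1 / Pj) * (-x⁻¹)
          = c * σ2 * (x ^ 2)⁻¹ * ((1 - x / Pj) - (Real.log Pj - Real.log x)) := by
        field_simp
        ring
      rw [e1]
      have hpos : 0 < c * σ2 * (x ^ 2)⁻¹ := by positivity
      nlinarith
    have hden : (0:ℝ) < (Real.log Pj - Real.log x) ^ 2 := by
      have : Real.log Pj - Real.log x ≠ 0 := sub_ne_zero.2 hlog.ne'
      positivity
    exact div_neg_of_neg_of_pos hnum hden

/-- The decisional threshold is strictly decreasing in its first argument:
for any `0 < P < P' < Pⱼ`, one has `g₀*(P, Pⱼ) > g₀*(P', Pⱼ)`. -/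
theorem threshold_strict_anti_fst (c σ2 P P' Pj : ℝ) (hc : 0 < c) (hσ2 : 0 < σ2)
    (hP : 0 < P) (hPP' : P < P') (hP'j : P' < Pj) :
    g0 c σ2 P Pj > g0 c σ2 P' Pj := by
  have hPj : 0 < Pj := (hP.trans hPP').trans hP'j
  exact g0_strictAntiOn c σ2 Pj hc hσ2 hPj ⟨hP, hPP'.trans hP'j⟩
    ⟨hP.trans hPP', hP'j⟩ hPP'
end

section
/- The decisional threshold is strictly decreasing in its second argument: for any 0 < Pᵢ < P < P', one has g₀*(Pᵢ, P) > g₀*(Pᵢ, P'). -/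
lemma ratio_strictAntiOn (a : ℝ) (ha : 0 < a) :
    StrictAntiOn (fun x => (1/a - 1/x) / (Real.log x - Real.log a)) (Set.Ioi a) := by
  have h : ∀ x ∈ Set.Ioi a, HasDerivAt (fun x => (1/a - 1/x) / (Real.log x - Real.log a))
      (((x^2)⁻¹ * (Real.log x - Real.log a) - (1/a - 1/x) * x⁻¹)
        / (Real.log x - Real.log a)^2) x := by
    intro x hx
    have hxa : a < x := hx
    have hx0 : 0 < x := ha.trans hxa
    have hL : Real.log a < Real.log x := Real.log_lt_log ha hxa
    have hA : HasDerivAt (fun x : ℝ => 1/a - 1/x) ((x^2)⁻¹) x := by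
      have := (hasDerivAt_inv hx0.ne').const_sub (1/a)
      simpa [one_div] using this
    have hLd : HasDerivAt (fun x : ℝ => Real.log x - Real.log a) x⁻¹ x :=
      (Real.hasDerivAt_log hx0.ne').sub_const _
    exact hA.div hLd (ne_of_gt (sub_pos.2 hL))
  apply strictAntiOn_of_deriv_neg (convex_Ioi a)
  · exact fun x hx => (h x hx).differentiableAt.continuousAt.continuousWithinAt
  · intro x hx
    rw [interior_Ioi] at hx
    rw [(h x hx).deriv]
    have hxa : a < x := hx
    have hx0 : 0 < x := ha.trans hxa
    have hL : Real.log a < Real.log x := Real.log_lt_log ha hxa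
    apply div_neg_of_neg_of_pos
    · -- numerator negative: (x²)⁻¹ L - A x⁻¹ < 0  ⟺  L < x A = x/a - 1
      have hlog : Real.log (x / a) < x / a - 1 :=
        Real.log_lt_sub_one_of_pos (div_pos hx0 ha) (by
          intro hcon
          have : x = a := by field_simp at hcon; linarith
          linarith)
      rw [Real.log_div hx0.ne' ha.ne'] at hlog
      have hxinv : (0:ℝ) < x⁻¹ := inv_pos.2 hx0
      have hx2 : (x^2)⁻¹ = x⁻¹ * x⁻¹ := by rw [sq, mul_inv]
      have hA' : (1/a - 1/x) = x⁻¹ * (x/a - 1) := by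
        field_simp
      rw [hx2, hA']
      have : Real.log x - Real.log a < x/a - 1 := hlog
      nlinarith [mul_pos hxinv hxinv]
    · exact pow_pos (sub_pos.2 hL) 2

/-- The decisional threshold is strictly decreasing in its second argument:
for any `0 < Pᵢ < P < P'`, one has `g₀*(Pᵢ, P) > g₀*(Pᵢ, P')`. -/
theorem threshold_strict_anti_snd (c σ2 Pi P P' : ℝ) (hc : 0 < c) (hσ2 : 0 < σ2)
    (hPi : 0 < Pi) (hiP : Pi < P) (hPP' : P < P') :
    g0 c σ2 Pi P > g0 c σ2 Pi P' := by
  have key := ratio_strictAntiOn Pi hPi (Set.mem_Ioi.2 hiP)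
    (Set.mem_Ioi.2 (hiP.trans hPP')) hPP'
  have hcs : 0 < c * σ2 := mul_pos hc hσ2
  unfold g0
  rw [mul_div_assoc, mul_div_assoc]
  exact mul_lt_mul_of_pos_left key hcs
end

section
/- For any three powers 0 < A < B < C, the thresholds are ordered as g₀*(A, B) > g₀*(A, C) > g₀*(B, C). -/
open Real

noncomputable def logMean (x y : ℝ) : ℝ :=
  (x - y) / (log x - log y)

theorem logMean_comm (x y : ℝ) : logMean x y = logMean y x := by
  rw [logMean, logMean, ← neg_sub y x, ← neg_sub (log y), neg_div_neg_eq]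

theorem logMean_lt_logMean_left {a x y : ℝ} (ha : 0 < a) (hx : 0 < x) (hxa : x ≠ a)
    (hya : y ≠ a) (hxy : x < y) : logMean x a < logMean y a := by
  have hy : 0 < y := hx.trans hxy
  have hlog_ne {z : ℝ} (hz : 0 < z) (hza : z ≠ a) : log z ≠ log a :=
    fun h => hza (log_injOn_pos hz ha h)
  have secant := strictConvexOn_exp.secant_strict_mono (Set.mem_univ (log a))
    (Set.mem_univ (log x)) (Set.mem_univ (log y)) (hlog_ne hx hxa) (hlog_ne hy hya)
    (log_lt_log hx hxy)
  rwa [exp_log ha, exp_log hx, exp_log hy] at secant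

theorem logMean_lt_logMean_right {a x y : ℝ} (ha : 0 < a) (hx : 0 < x) (hxa : x ≠ a)
    (hya : y ≠ a) (hxy : x < y) : logMean a x < logMean a y := by
  rw [logMean_comm a x, logMean_comm a y]
  exact logMean_lt_logMean_left ha hx hxa hya hxy

theorem g0_eq_mul_logMean (c σ2 P Q : ℝ) : g0 c σ2 P Q = c * σ2 * logMean P⁻¹ Q⁻¹ := by
  rw [g0, logMean, log_inv, log_inv, neg_sub_neg, one_div, one_div, mul_div_assoc]

/-- For any three powers `0 < A < B < C`, the thresholds are ordered as
`g₀*(A, B) > g₀*(A, C) > g₀*(B, C)`. -/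
theorem threshold_ordering (c σ2 A B C : ℝ) (hc : 0 < c) (hσ2 : 0 < σ2)
    (hA : 0 < A) (hAB : A < B) (hBC : B < C) :
    g0 c σ2 A B > g0 c σ2 A C ∧ g0 c σ2 A C > g0 c σ2 B C := by
  have hB : 0 < B := hA.trans hAB
  have hC : 0 < C := hB.trans hBC
  have hBA : B⁻¹ < A⁻¹ := inv_strictAnti₀ hA hAB
  have hCB : C⁻¹ < B⁻¹ := inv_strictAnti₀ hB hBC
  have hcσ2 : 0 < c * σ2 := mul_pos hc hσ2
  simp only [g0_eq_mul_logMean, gt_iff_lt]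
  constructor
  · exact mul_lt_mul_of_pos_left (logMean_lt_logMean_right (inv_pos.mpr hA) (inv_pos.mpr hC)
      (hCB.trans hBA).ne hBA.ne hCB) hcσ2
  · exact mul_lt_mul_of_pos_left (logMean_lt_logMean_left (inv_pos.mpr hC) (inv_pos.mpr hB)
      hCB.ne' (hCB.trans hBA).ne' hBA) hcσ2
end

section
/- Let 0 < P₁ < P₂ < ⋯ < P_M be powers with M ≥ 3, and set t_k := g₀*(P_k, P_{k+1}) for k = 1, …, M−1. For any index k with 2 ≤ k ≤ M−1 and any channel gain g with t_k < g < t_{k−1}, the power P_k is the strict best response: u(P_k; g) > u(P_l; g) for every l ≠ k. In particular only the consecutive thresholds g₀*(P_k, P_{k+1}) are effective decision boundaries. -/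
lemma g0_bounds (c σ2 Pi Pj : ℝ) (hc : 0 < c) (hσ : 0 < σ2) (hPi : 0 < Pi)
    (hij : Pi < Pj) : c * σ2 / Pj < g0 c σ2 Pi Pj ∧ g0 c σ2 Pi Pj < c * σ2 / Pi := by
  have hPj : 0 < Pj := hPi.trans hij
  have hD : 0 < Real.log Pj - Real.log Pi := sub_pos.mpr (Real.log_lt_log hPi hij)
  have hA : 0 < c * σ2 := mul_pos hc hσ
  have h1 : Real.log (Pj / Pi) < Pj / Pi - 1 :=
    Real.log_lt_sub_one_of_pos (div_pos hPj hPi) (by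
      intro h
      have := (div_eq_one_iff_eq hPi.ne').mp h
      linarith)
  have h2 : Real.log (Pi / Pj) < Pi / Pj - 1 :=
    Real.log_lt_sub_one_of_pos (div_pos hPi hPj) (by
      intro h
      have := (div_eq_one_iff_eq hPj.ne').mp h
      linarith)
  rw [Real.log_div hPj.ne' hPi.ne'] at h1
  rw [Real.log_div hPi.ne' hPj.ne'] at h2
  unfold g0
  constructor
  · rw [div_lt_div_iff₀ hPj hD]
    have e2 : c * σ2 * (1 / Pi - 1 / Pj) * Pj = c * σ2 * ((Pj - Pi) / Pi) := by
      field_simp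
    have e3 : Pj / Pi - 1 = (Pj - Pi) / Pi := by field_simp
    rw [e2]; rw [e3] at h1
    nlinarith [mul_lt_mul_of_pos_left h1 hA]
  · rw [div_lt_div_iff₀ hD hPi]
    have e2 : c * σ2 * (1 / Pi - 1 / Pj) * Pi = c * σ2 * ((Pj - Pi) / Pj) := by
      field_simp
    have e3 : Pi / Pj - 1 = -((Pj - Pi) / Pj) := by field_simp; ring
    rw [e2]; rw [e3] at h2
    nlinarith [mul_lt_mul_of_pos_left h2 hA]

lemma u_gt_iff (c σ2 Pi Pj g : ℝ) (hc : 0 < c) (hσ : 0 < σ2) (hPi : 0 < Pi)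
    (hij : Pi < Pj) (hg : 0 < g) :
    u c σ2 Pi g > u c σ2 Pj g ↔ g0 c σ2 Pi Pj < g := by
  have hPj : 0 < Pj := hPi.trans hij
  have hD : 0 < Real.log Pj - Real.log Pi := sub_pos.mpr (Real.log_lt_log hPi hij)
  unfold u g0
  rw [gt_iff_lt, div_lt_div_iff₀ hPj hPi, div_lt_iff₀ hD,
    ← Real.log_lt_log_iff (by positivity) (by positivity),
    Real.log_mul (Real.exp_ne_zero _) hPi.ne', Real.log_mul (Real.exp_ne_zero _) hPj.ne',
    Real.log_exp, Real.log_exp]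
  have key : (-(c * σ2) / (Pi * g) + Real.log Pj) - (-(c * σ2) / (Pj * g) + Real.log Pi)
      = (g * (Real.log Pj - Real.log Pi) - c * σ2 * (1 / Pi - 1 / Pj)) / g := by
    field_simp; ring
  constructor
  · intro h
    have h' : 0 < (g * (Real.log Pj - Real.log Pi) - c * σ2 * (1 / Pi - 1 / Pj)) / g := by
      rw [← key]; linarith
    rcases div_pos_iff.mp h' with ⟨h1, _⟩ | ⟨_, h2⟩
    · linarith
    · linarith
  · intro h
    have h' : 0 < (g * (Real.log Pj - Real.log Pi) - c * σ2 * (1 / Pi - 1 / Pj)) / g :=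
      div_pos (by linarith) hg
    rw [← key] at h'; linarith

lemma u_lt_iff (c σ2 Pi Pj g : ℝ) (hc : 0 < c) (hσ : 0 < σ2) (hPi : 0 < Pi)
    (hij : Pi < Pj) (hg : 0 < g) :
    u c σ2 Pi g < u c σ2 Pj g ↔ g < g0 c σ2 Pi Pj := by
  have hPj : 0 < Pj := hPi.trans hij
  have hD : 0 < Real.log Pj - Real.log Pi := sub_pos.mpr (Real.log_lt_log hPi hij)
  unfold u g0
  rw [div_lt_div_iff₀ hPi hPj, lt_div_iff₀ hD,
    ← Real.log_lt_log_iff (by positivity) (by positivity),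
    Real.log_mul (Real.exp_ne_zero _) hPj.ne', Real.log_mul (Real.exp_ne_zero _) hPi.ne',
    Real.log_exp, Real.log_exp]
  have key : (-(c * σ2) / (Pj * g) + Real.log Pi) - (-(c * σ2) / (Pi * g) + Real.log Pj)
      = (c * σ2 * (1 / Pi - 1 / Pj) - g * (Real.log Pj - Real.log Pi)) / g := by
    field_simp; ring
  constructor
  · intro h
    have h' : 0 < (c * σ2 * (1 / Pi - 1 / Pj) - g * (Real.log Pj - Real.log Pi)) / g := by
      rw [← key]; linarith
    rcases div_pos_iff.mp h' with ⟨h1, _⟩ | ⟨_, h2⟩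
    · linarith
    · linarith
  · intro h
    have h' : 0 < (c * σ2 * (1 / Pi - 1 / Pj) - g * (Real.log Pj - Real.log Pi)) / g :=
      div_pos (by linarith) hg
    rw [← key] at h'; linarith

/-- Let `0 < P₁ < ⋯ < P_M`, `M ≥ 3`, and `t_k := g₀*(P_k, P_{k+1})`.
For `2 ≤ k ≤ M−1` and any gain `g` with `t_k < g < t_{k−1}`, the power `P_k`
is the strict best response: `u(P_k; g) > u(P_l; g)` for every `l ≠ k`. -/
theorem strict_best_response_between_thresholds (c σ2 : ℝ) (M : ℕ) (P : ℕ → ℝ)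
    (hc : 0 < c) (hσ2 : 0 < σ2) (hM : 3 ≤ M)
    (hP0 : 0 < P 1)
    (hmono : ∀ k, 1 ≤ k → k < M → P k < P (k + 1)) :
    ∀ k, 2 ≤ k → k ≤ M - 1 →
      ∀ g, g0 c σ2 (P k) (P (k + 1)) < g → g < g0 c σ2 (P (k - 1)) (P k) →
        ∀ l, 1 ≤ l → l ≤ M → l ≠ k → u c σ2 (P k) g > u c σ2 (P l) g := by
  intro k hk2 hkM g hg1 hg2 l hl1 hlM hlk
  have hpos : ∀ m, 1 ≤ m → m ≤ M → 0 < P m := by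
    intro m hm
    induction m, hm using Nat.le_induction with
    | base => intro _; exact hP0
    | succ n hn ih =>
      intro hnM
      exact (ih (by omega)).trans (hmono n hn (by omega))
  have hA : 0 < c * σ2 := mul_pos hc hσ2
  have hkpos : 0 < P k := hpos k (by omega) (by omega)
  have hg : 0 < g := by
    have b := g0_bounds c σ2 (P k) (P (k + 1)) hc hσ2 hkpos (hmono k (by omega) (by omega))
    have : 0 < c * σ2 / P (k + 1) := div_pos hA (hpos (k + 1) (by omega) (by omega))
    linarith
  have right : ∀ m, k + 1 ≤ m → m ≤ M →
      g0 c σ2 (P (m - 1)) (P m) < g ∧ u c σ2 (P k) g > u c σ2 (P m) g := by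
    intro m hm
    induction m, hm using Nat.le_induction with
    | base =>
      intro _
      simp only [Nat.add_sub_cancel]
      exact ⟨hg1, (u_gt_iff c σ2 (P k) (P (k + 1)) g hc hσ2 hkpos
        (hmono k (by omega) (by omega)) hg).mpr hg1⟩
    | succ n hn ih =>
      intro hnM
      obtain ⟨ht, hu⟩ := ih (by omega)
      have hn1M : n < M := by omega
      have hnpos : 0 < P n := hpos n (by omega) (by omega)
      have hn1pos : 0 < P (n - 1) := hpos (n - 1) (by omega) (by omega)
      have hmn : P (n - 1) < P n := by
        have := hmono (n - 1) (by omega) (by omega)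
        rwa [show n - 1 + 1 = n from by omega] at this
      have b1 := g0_bounds c σ2 (P n) (P (n + 1)) hc hσ2 hnpos (hmono n (by omega) hn1M)
      have b2 := g0_bounds c σ2 (P (n - 1)) (P n) hc hσ2 hn1pos hmn
      have hlt : g0 c σ2 (P n) (P (n + 1)) < g := by linarith [b1.2, b2.1]
      refine ⟨by simpa only [Nat.add_sub_cancel] using hlt, ?_⟩
      have := (u_gt_iff c σ2 (P n) (P (n + 1)) g hc hσ2 hnpos (hmono n (by omega) hn1M) hg).mpr hlt
      linarith
  have left : ∀ d, ∀ m, 1 ≤ m → m + d = k - 1 →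
      g < g0 c σ2 (P m) (P (m + 1)) ∧ u c σ2 (P m) g < u c σ2 (P k) g := by
    intro d
    induction d with
    | zero =>
      intro m hm1 hmk
      have hm : m = k - 1 := by omega
      subst hm
      rw [show k - 1 + 1 = k from by omega]
      have hpm : 0 < P (k - 1) := hpos (k - 1) (by omega) (by omega)
      have hlt : P (k - 1) < P k := by
        have := hmono (k - 1) (by omega) (by omega)
        rwa [show k - 1 + 1 = k from by omega] at this
      exact ⟨hg2, (u_lt_iff c σ2 (P (k - 1)) (P k) g hc hσ2 hpm hlt hg).mpr hg2⟩
    | succ d ih =>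
      intro m hm1 hmk
      obtain ⟨ht, hu⟩ := ih (m + 1) (by omega) (by omega)
      have hm2M : m + 1 < M := by omega
      have hmM : m < M := by omega
      have hmpos : 0 < P m := hpos m hm1 (by omega)
      have hm1pos : 0 < P (m + 1) := hpos (m + 1) (by omega) (by omega)
      have b1 := g0_bounds c σ2 (P (m + 1)) (P (m + 1 + 1)) hc hσ2 hm1pos
        (hmono (m + 1) (by omega) hm2M)
      have b2 := g0_bounds c σ2 (P m) (P (m + 1)) hc hσ2 hmpos (hmono m hm1 hmM)
      have hlt : g < g0 c σ2 (P m) (P (m + 1)) := by linarith [b1.2, b2.1]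
      refine ⟨hlt, ?_⟩
      have := (u_lt_iff c σ2 (P m) (P (m + 1)) g hc hσ2 hmpos (hmono m hm1 hmM) hg).mpr hlt
      linarith
  rcases lt_or_gt_of_ne hlk with h | h
  · exact (left (k - 1 - l) l hl1 (by omega)).2
  · exact (right l (by omega) hlM).2
end

section
/- Let 0 < P₁ < P₂ < ⋯ < P_M be powers with M ≥ 2. For any channel gain g > g₀*(P₁, P₂), the smallest power is the strict best response: u(P₁; g) > u(P_l; g) for every l ∈ {2, …, M}. -/
/-- The threshold-type ratio is antitone in its upper argument. -/
lemma ratio_anti {a b x : ℝ} (ha : 0 < a) (hab : a < b) (hbx : b ≤ x) :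
    (1 / a - 1 / x) / (Real.log x - Real.log a)
      ≤ (1 / a - 1 / b) / (Real.log b - Real.log a) := by
  have hb : 0 < b := ha.trans hab
  have hx : 0 < x := hb.trans_le hbx
  have hlab : Real.log a < Real.log b := Real.log_lt_log ha hab
  have hlbx : Real.log b ≤ Real.log x := Real.log_le_log hb hbx
  have h := convexOn_exp.secant_mono (a := -Real.log a) (x := -Real.log x)
    (y := -Real.log b) (Set.mem_univ _) (Set.mem_univ _) (Set.mem_univ _)
    (by intro h; nlinarith [hlab.trans_le hlbx, neg_injective h])
    (by intro h; nlinarith [hlab, neg_injective h])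
    (by linarith)
  rw [Real.exp_neg, Real.exp_neg, Real.exp_neg, Real.exp_log ha, Real.exp_log hb,
    Real.exp_log hx] at h
  have e1 : (x⁻¹ - a⁻¹) / (-Real.log x - -Real.log a)
      = (1 / a - 1 / x) / (Real.log x - Real.log a) := by
    rw [show x⁻¹ - a⁻¹ = -(1 / a - 1 / x) by ring,
      show -Real.log x - -Real.log a = -(Real.log x - Real.log a) by ring, neg_div_neg_eq]
  have e2 : (b⁻¹ - a⁻¹) / (-Real.log b - -Real.log a)
      = (1 / a - 1 / b) / (Real.log b - Real.log a) := by
    rw [show b⁻¹ - a⁻¹ = -(1 / a - 1 / b) by ring,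
      show -Real.log b - -Real.log a = -(Real.log b - Real.log a) by ring, neg_div_neg_eq]
  rw [e1, e2] at h
  exact h

/-- Let `0 < P₁ < ⋯ < P_M` with `M ≥ 2`. For any channel gain
`g > g₀*(P₁, P₂)`, the smallest power is the strict best response:
`u(P₁; g) > u(P_l; g)` for every `l ∈ {2, …, M}`. -/
theorem smallest_power_best_above_first_threshold (c σ2 : ℝ) (M : ℕ) (P : ℕ → ℝ)
    (hc : 0 < c) (hσ2 : 0 < σ2) (hM : 2 ≤ M)
    (hP0 : 0 < P 1)
    (hmono : ∀ k, 1 ≤ k → k < M → P k < P (k + 1)) :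
    ∀ g, g0 c σ2 (P 1) (P 2) < g →
      ∀ l, 2 ≤ l → l ≤ M → u c σ2 (P 1) g > u c σ2 (P l) g := by
  intro g hg l hl2 hlM
  have h12 : P 1 < P 2 := hmono 1 le_rfl (by omega)
  have hle : ∀ n, 2 ≤ n → n ≤ M → P 2 ≤ P n := by
    intro n hn2 hnM
    induction n with
    | zero => omega
    | succ m ih =>
      rcases Nat.lt_or_ge m 2 with h | h
      · have : m = 1 := by omega
        subst this; exact le_rfl
      · exact (ih h (by omega)).trans (hmono m (by omega) (by omega)).le
  set a := P 1 with ha_def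
  set b := P 2 with hb_def
  set p := P l with hp_def
  have hbp : b ≤ p := hle l hl2 hlM
  have hb : 0 < b := hP0.trans h12
  have hp : 0 < p := hb.trans_le hbp
  have hap : a < p := h12.trans_le hbp
  have hlab : Real.log a < Real.log b := Real.log_lt_log hP0 h12
  have hlap : Real.log a < Real.log p := Real.log_lt_log hP0 hap
  have hA : 0 < c * σ2 := mul_pos hc hσ2
  -- g is positive since the threshold is positive
  have hg0pos : 0 < g0 c σ2 a b := by
    apply div_pos
    · apply mul_pos hA
      have := one_div_lt_one_div_of_lt hP0 h12
      linarith
    · linarith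
  have hgpos : 0 < g := hg0pos.trans hg
  -- threshold comparison
  have hratio := ratio_anti hP0 h12 hbp
  have hkey : c * σ2 * (1 / a - 1 / p) / (Real.log p - Real.log a) < g := by
    calc c * σ2 * (1 / a - 1 / p) / (Real.log p - Real.log a)
        = c * σ2 * ((1 / a - 1 / p) / (Real.log p - Real.log a)) := by ring
      _ ≤ c * σ2 * ((1 / a - 1 / b) / (Real.log b - Real.log a)) := by
          exact mul_le_mul_of_nonneg_left hratio hA.le
      _ = g0 c σ2 a b := by rw [g0]; ring
      _ < g := hg
  have h2 : c * σ2 * (1 / a - 1 / p) < g * (Real.log p - Real.log a) :=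
    by have := (div_lt_iff₀ (by linarith : (0:ℝ) < Real.log p - Real.log a)).mp hkey
       linarith [this]
  have h3 : c * σ2 / (a * g) - c * σ2 / (p * g) < Real.log p - Real.log a := by
    rw [div_sub_div _ _ (by positivity : a * g ≠ 0) (by positivity : p * g ≠ 0)]
    rw [div_lt_iff₀ (by positivity)]
    have hpos : (0 : ℝ) < a * p * g := by positivity
    have h2' := mul_lt_mul_of_pos_right h2 hpos
    have eL : c * σ2 * (1 / a - 1 / p) * (a * p * g)
        = c * σ2 * (p * g) - a * g * (c * σ2) := by
      field_simp
    have eR : g * (Real.log p - Real.log a) * (a * p * g)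
        = (Real.log p - Real.log a) * (a * g * (p * g)) := by ring
    rw [eL] at h2'
    linarith [h2', eR]
  -- conclude
  show u c σ2 p g < u c σ2 a g
  rw [u, u, div_lt_div_iff₀ hp hP0]
  have ea : a = Real.exp (Real.log a) := (Real.exp_log hP0).symm
  have ep : p = Real.exp (Real.log p) := (Real.exp_log hp).symm
  calc Real.exp (-(c * σ2) / (p * g)) * a
      = Real.exp (-(c * σ2) / (p * g) + Real.log a) := by
        rw [Real.exp_add, Real.exp_log hP0]
    _ < Real.exp (-(c * σ2) / (a * g) + Real.log p) := by
        apply Real.exp_lt_exp.mpr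
        have e1 : -(c * σ2) / (p * g) = -(c * σ2 / (p * g)) := by ring
        have e2 : -(c * σ2) / (a * g) = -(c * σ2 / (a * g)) := by ring
        rw [e1, e2]; linarith
    _ = Real.exp (-(c * σ2) / (a * g)) * p := by
        rw [Real.exp_add, Real.exp_log hp]
end

section
/- Let 0 < P₁ < P₂ < ⋯ < P_M be powers with M ≥ 2. For any channel gain g with 0 < g < g₀*(P_{M−1}, P_M), the largest power is the strict best response: u(P_M; g) > u(P_l; g) for every l ∈ {1, …, M−1}. -/
lemma u_lt_of_lt_g0 (c σ2 Pi Pj g : ℝ) (hc : 0 < c) (hσ2 : 0 < σ2)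
    (hPi : 0 < Pi) (hij : Pi < Pj) (hg : 0 < g) (h : g < g0 c σ2 Pi Pj) :
    u c σ2 Pi g < u c σ2 Pj g := by
  have hPj : 0 < Pj := hPi.trans hij
  have hD : 0 < Real.log Pj - Real.log Pi := sub_pos.mpr (Real.log_lt_log hPi hij)
  have key : g * (Real.log Pj - Real.log Pi) < c * σ2 * (1 / Pi - 1 / Pj) :=
    (lt_div_iff₀ hD).mp h
  have key2 : Real.log Pj - Real.log Pi < c * σ2 * (1 / Pi - 1 / Pj) / g := by
    rw [lt_div_iff₀ hg]; linarith [key]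
  have h1 : -(c * σ2) / (Pi * g) - Real.log Pi < -(c * σ2) / (Pj * g) - Real.log Pj := by
    have e : c * σ2 / (Pi * g) - c * σ2 / (Pj * g) = c * σ2 * (1 / Pi - 1 / Pj) / g := by
      field_simp
    have : Real.log Pj - Real.log Pi < c * σ2 / (Pi * g) - c * σ2 / (Pj * g) := by
      rw [e]; exact key2
    rw [neg_div, neg_div]; linarith
  have : Real.exp (-(c * σ2) / (Pi * g) - Real.log Pi)
      < Real.exp (-(c * σ2) / (Pj * g) - Real.log Pj) := Real.exp_lt_exp.mpr h1
  rwa [Real.exp_sub, Real.exp_sub, Real.exp_log hPi, Real.exp_log hPj] at this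

lemma g0_gt (c σ2 Pi Pj : ℝ) (hc : 0 < c) (hσ2 : 0 < σ2)
    (hPi : 0 < Pi) (hij : Pi < Pj) : c * σ2 / Pj < g0 c σ2 Pi Pj := by
  have hPj : 0 < Pj := hPi.trans hij
  have hD : 0 < Real.log Pj - Real.log Pi := sub_pos.mpr (Real.log_lt_log hPi hij)
  have hlog : Real.log (Pj / Pi) < Pj / Pi - 1 := by
    apply Real.log_lt_sub_one_of_pos (div_pos hPj hPi)
    intro h; rw [div_eq_one_iff_eq (ne_of_gt hPi)] at h; exact absurd h (ne_of_gt hij)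
  rw [Real.log_div (ne_of_gt hPj) (ne_of_gt hPi)] at hlog
  unfold g0
  rw [div_lt_div_iff₀ hPj hD]
  have ha : 0 < c * σ2 := mul_pos hc hσ2
  have e : c * σ2 * (1 / Pi - 1 / Pj) * Pj = c * σ2 * (Pj / Pi - 1) := by
    field_simp
  rw [e]
  have := mul_lt_mul_of_pos_left hlog ha
  linarith [this]

lemma g0_lt (c σ2 Pi Pj : ℝ) (hc : 0 < c) (hσ2 : 0 < σ2)
    (hPi : 0 < Pi) (hij : Pi < Pj) : g0 c σ2 Pi Pj < c * σ2 / Pi := by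
  have hPj : 0 < Pj := hPi.trans hij
  have hD : 0 < Real.log Pj - Real.log Pi := sub_pos.mpr (Real.log_lt_log hPi hij)
  have hlog : Real.log (Pi / Pj) < Pi / Pj - 1 := by
    apply Real.log_lt_sub_one_of_pos (div_pos hPi hPj)
    intro h; rw [div_eq_one_iff_eq (ne_of_gt hPj)] at h; exact absurd h (ne_of_lt hij)
  rw [Real.log_div (ne_of_gt hPi) (ne_of_gt hPj)] at hlog
  unfold g0
  rw [div_lt_div_iff₀ hD hPi]
  have ha : 0 < c * σ2 := mul_pos hc hσ2
  have e : c * σ2 * (1 / Pi - 1 / Pj) * Pi = c * σ2 * (1 - Pi / Pj) := by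
    field_simp
  rw [e]
  have h2 : 1 - Pi / Pj < Real.log Pj - Real.log Pi := by linarith
  have := mul_lt_mul_of_pos_left h2 ha
  linarith [this]

/-- Let `0 < P₁ < ⋯ < P_M` with `M ≥ 2`. For any channel gain `g` with
`0 < g < g₀*(P_{M−1}, P_M)`, the largest power is the strict best response:
`u(P_M; g) > u(P_l; g)` for every `l ∈ {1, …, M−1}`. -/
theorem largest_power_best_below_last_threshold (c σ2 : ℝ) (M : ℕ) (P : ℕ → ℝ)
    (hc : 0 < c) (hσ2 : 0 < σ2) (hM : 2 ≤ M)
    (hP0 : 0 < P 1)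
    (hmono : ∀ k, 1 ≤ k → k < M → P k < P (k + 1)) :
    ∀ g, 0 < g → g < g0 c σ2 (P (M - 1)) (P M) →
      ∀ l, 1 ≤ l → l ≤ M - 1 → u c σ2 (P M) g > u c σ2 (P l) g := by
  intro g hg hgth l hl1 hlM
  -- positivity of P k for 1 ≤ k ≤ M
  have hpos : ∀ k, 1 ≤ k → k ≤ M → 0 < P k := by
    intro k hk1 hkM
    induction k with
    | zero => omega
    | succ n ih =>
      rcases Nat.eq_or_lt_of_le hk1 with h | h
      · rw [← h]; exact hP0
      · have hn1 : 1 ≤ n := by omega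
        have := hmono n hn1 (by omega)
        exact (ih hn1 (by omega)).trans this
  -- monotonicity: P a ≤ P b for 1 ≤ a ≤ b ≤ M
  have hmon : ∀ a b, 1 ≤ a → a ≤ b → b ≤ M → P a ≤ P b := by
    intro a b ha hab hbM
    induction b with
    | zero => omega
    | succ n ih =>
      rcases Nat.eq_or_lt_of_le hab with h | h
      · rw [h]
      · have : P a ≤ P n := ih (by omega) (by omega)
        exact this.trans (le_of_lt (hmono n (by omega) (by omega)))
  have hM1 : 1 ≤ M - 1 := by omega
  have hstep : P (M - 1) < P M := by
    have := hmono (M - 1) hM1 (by omega)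
    rwa [Nat.sub_add_cancel (by omega)] at this
  -- key: for any k with 1 ≤ k ≤ M-2, g < g0 c σ2 (P k) (P (k+1))
  have hchain : ∀ k, 1 ≤ k → k + 1 ≤ M - 1 → u c σ2 (P k) g < u c σ2 (P (k+1)) g := by
    intro k hk1 hk2
    have hPk : 0 < P k := hpos k hk1 (by omega)
    have hlt : P k < P (k+1) := hmono k hk1 (by omega)
    apply u_lt_of_lt_g0 c σ2 _ _ g hc hσ2 hPk hlt hg
    have h1 : g < c * σ2 / P (M - 1) :=
      hgth.trans (g0_lt c σ2 _ _ hc hσ2 (hpos _ hM1 (by omega)) hstep)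
    have h2 : c * σ2 / P (M - 1) ≤ c * σ2 / P (k+1) := by
      apply div_le_div_of_nonneg_left (le_of_lt (mul_pos hc hσ2)) (hpos _ (by omega) (by omega))
      exact hmon (k+1) (M-1) (by omega) hk2 (by omega)
    have h3 : c * σ2 / P (k+1) < g0 c σ2 (P k) (P (k+1)) :=
      g0_gt c σ2 _ _ hc hσ2 hPk hlt
    linarith
  -- downward induction via d = M - 1 - l steps
  have main : ∀ d k, 1 ≤ k → k + d = M - 1 → u c σ2 (P k) g < u c σ2 (P M) g := by
    intro d
    induction d with
    | zero =>
      intro k hk1 hkd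
      have hk : k = M - 1 := by omega
      subst hk
      exact u_lt_of_lt_g0 c σ2 _ _ g hc hσ2 (hpos _ hM1 (by omega)) hstep hg hgth
    | succ n ih =>
      intro k hk1 hkd
      have h1 : u c σ2 (P k) g < u c σ2 (P (k+1)) g := hchain k hk1 (by omega)
      have h2 : u c σ2 (P (k+1)) g < u c σ2 (P M) g := ih (k+1) (by omega) (by omega)
      exact h1.trans h2
  exact main (M - 1 - l) l hl1 (by omega)
end

section
/- Let 0 < P₁ < P₂ < ⋯ < P_M be powers with M ≥ 3, and set t_k := g₀*(P_k, P_{k+1}) for k = 1, …, M−1. For any index k with 2 ≤ k ≤ M−1, the decision region of P_k is exactly the closed interval between consecutive thresholds: {g > 0 : u(P_k; g) = max_{1 ≤ l ≤ M} u(P_l; g)} = [t_k, t_{k−1}]. -/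

lemma u_le_u_iff (c σ2 : ℝ) (ha : 0 < c * σ2) {x y g : ℝ} (hx : 0 < x) (hxy : x < y)
    (hg : 0 < g) : u c σ2 y g ≤ u c σ2 x g ↔ g0 c σ2 x y ≤ g := by
  have hy : 0 < y := hx.trans hxy
  have hL : 0 < Real.log y - Real.log x := sub_pos.mpr (Real.log_lt_log hx hxy)
  have hux : 0 < u c σ2 x g := div_pos (Real.exp_pos _) hx
  have huy : 0 < u c σ2 y g := div_pos (Real.exp_pos _) hy
  rw [← Real.log_le_log_iff huy hux]
  unfold u g0
  rw [Real.log_div (Real.exp_ne_zero _) hx.ne', Real.log_div (Real.exp_ne_zero _) hy.ne',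
    Real.log_exp, Real.log_exp, div_le_iff₀ hL, ← sub_nonneg]
  have e1 : (-(c*σ2)/(x*g) - Real.log x) - (-(c*σ2)/(y*g) - Real.log y)
      = (g*(Real.log y - Real.log x) - c * σ2 * (1 / x - 1 / y))/g := by
    field_simp; ring
  rw [e1, le_div_iff₀ hg, zero_mul, sub_nonneg]

lemma u_le_u_iff' (c σ2 : ℝ) (ha : 0 < c * σ2) {x y g : ℝ} (hx : 0 < x) (hxy : x < y)
    (hg : 0 < g) : u c σ2 x g ≤ u c σ2 y g ↔ g ≤ g0 c σ2 x y := by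
  have hy : 0 < y := hx.trans hxy
  have hL : 0 < Real.log y - Real.log x := sub_pos.mpr (Real.log_lt_log hx hxy)
  have hux : 0 < u c σ2 x g := div_pos (Real.exp_pos _) hx
  have huy : 0 < u c σ2 y g := div_pos (Real.exp_pos _) hy
  rw [← Real.log_le_log_iff hux huy]
  unfold u g0
  rw [Real.log_div (Real.exp_ne_zero _) hx.ne', Real.log_div (Real.exp_ne_zero _) hy.ne',
    Real.log_exp, Real.log_exp, le_div_iff₀ hL, ← sub_nonneg]
  have e1 : (-(c*σ2)/(y*g) - Real.log y) - (-(c*σ2)/(x*g) - Real.log x)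
      = (c * σ2 * (1 / x - 1 / y) - g*(Real.log y - Real.log x))/g := by
    field_simp; ring
  rw [e1, le_div_iff₀ hg, zero_mul, sub_nonneg]

lemma lt_g0 (c σ2 : ℝ) (ha : 0 < c * σ2) {x y : ℝ} (hx : 0 < x) (hxy : x < y) :
    c * σ2 / y < g0 c σ2 x y := by
  have hy : 0 < y := hx.trans hxy
  have hL : 0 < Real.log y - Real.log x := sub_pos.mpr (Real.log_lt_log hx hxy)
  unfold g0
  rw [div_lt_div_iff₀ hy hL]
  have hlog : Real.log (y/x) < y/x - 1 :=
    Real.log_lt_sub_one_of_pos (div_pos hy hx) (ne_of_gt ((one_lt_div hx).mpr hxy))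
  rw [Real.log_div hy.ne' hx.ne'] at hlog
  have e : c * σ2 * (1 / x - 1 / y) * y = c * σ2 * (y/x - 1) := by field_simp
  rw [e]
  exact mul_lt_mul_of_pos_left (by linarith) ha

lemma g0_lt_s12 (c σ2 : ℝ) (ha : 0 < c * σ2) {x y : ℝ} (hx : 0 < x) (hxy : x < y) :
    g0 c σ2 x y < c * σ2 / x := by
  have hy : 0 < y := hx.trans hxy
  have hL : 0 < Real.log y - Real.log x := sub_pos.mpr (Real.log_lt_log hx hxy)
  unfold g0
  rw [div_lt_div_iff₀ hL hx]
  have hlog : Real.log (x/y) < x/y - 1 :=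
    Real.log_lt_sub_one_of_pos (div_pos hx hy) (ne_of_lt ((div_lt_one hy).mpr hxy))
  rw [Real.log_div hx.ne' hy.ne'] at hlog
  have e : c * σ2 * (1 / x - 1 / y) * x = c * σ2 * (1 - x/y) := by field_simp
  rw [e]
  exact mul_lt_mul_of_pos_left (by linarith) ha

/-- Let `0 < P₁ < ⋯ < P_M`, `M ≥ 3`, and `t_k := g₀*(P_k, P_{k+1})`.
For `2 ≤ k ≤ M−1`, the decision region of `P_k` is exactly the closed interval
between consecutive thresholds:
`{g > 0 : u(P_k; g) = max_{1 ≤ l ≤ M} u(P_l; g)} = [t_k, t_{k−1}]`. -/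
theorem decision_region_eq_Icc (c σ2 : ℝ) (M : ℕ) (P : ℕ → ℝ)
    (hc : 0 < c) (hσ2 : 0 < σ2) (hM : 3 ≤ M)
    (hP0 : 0 < P 1)
    (hmono : ∀ k, 1 ≤ k → k < M → P k < P (k + 1)) :
    ∀ k, 2 ≤ k → k ≤ M - 1 →
      {g : ℝ | 0 < g ∧
          u c σ2 (P k) g =
            (Finset.Icc 1 M).sup' (Finset.nonempty_Icc.mpr (by omega))
              (fun l => u c σ2 (P l) g)} =
        Set.Icc (g0 c σ2 (P k) (P (k + 1))) (g0 c σ2 (P (k - 1)) (P k)) := by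
  intro k hk2 hkM
  have ha : 0 < c * σ2 := mul_pos hc hσ2
  -- positivity of P on [1, M]
  have hPpos : ∀ j, 1 ≤ j → j ≤ M → 0 < P j := by
    intro j h1 h2
    induction j, h1 using Nat.le_induction with
    | base => exact hP0
    | succ n hn ih =>
      exact lt_trans (ih (by omega)) (hmono n hn (by omega))
  -- monotonicity of P on [1, M]
  have hPle : ∀ i j, 1 ≤ i → i ≤ j → j ≤ M → P i ≤ P j := by
    intro i j h1 hij hjM
    induction j, hij using Nat.le_induction with
    | base => exact le_refl _
    | succ n hn ih =>
      exact le_trans (ih (by omega)) (le_of_lt (hmono n (by omega) (by omega)))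
  -- monotonicity of thresholds
  have ht_mono : ∀ i j, 1 ≤ i → i ≤ j → j < M →
      g0 c σ2 (P j) (P (j + 1)) ≤ g0 c σ2 (P i) (P (i + 1)) := by
    intro i j h1 hij hjM
    rcases eq_or_lt_of_le hij with rfl | hlt
    · exact le_refl _
    · have hPj : 0 < P j := hPpos j (by omega) (by omega)
      have hPi1 : 0 < P (i + 1) := hPpos (i + 1) (by omega) (by omega)
      have h1' : g0 c σ2 (P j) (P (j + 1)) < c * σ2 / P j :=
        g0_lt_s12 c σ2 ha hPj (hmono j (by omega) hjM)
      have h2' : c * σ2 / P (i + 1) < g0 c σ2 (P i) (P (i + 1)) :=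
        lt_g0 c σ2 ha (hPpos i (by omega) (by omega)) (hmono i h1 (by omega))
      have h3' : c * σ2 / P j ≤ c * σ2 / P (i + 1) :=
        div_le_div_of_nonneg_left (le_of_lt ha) hPi1 (hPle (i + 1) j (by omega) hlt (by omega))
      linarith
  have hk1 : k - 1 + 1 = k := by omega
  have hPk : 0 < P k := hPpos k (by omega) (by omega)
  have hPkm : 0 < P (k - 1) := hPpos (k - 1) (by omega) (by omega)
  have hPmk : P (k - 1) < P k := by
    have := hmono (k - 1) (by omega) (by omega)
    rwa [hk1] at this
  have hPkk : P k < P (k + 1) := hmono k (by omega) (by omega)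
  ext g
  simp only [Set.mem_setOf_eq, Set.mem_Icc]
  constructor
  · rintro ⟨hg, heq⟩
    have h1 : u c σ2 (P (k + 1)) g ≤ u c σ2 (P k) g := by
      rw [heq]
      exact Finset.le_sup' (fun l => u c σ2 (P l) g) (Finset.mem_Icc.mpr ⟨by omega, by omega⟩)
    have h2 : u c σ2 (P (k - 1)) g ≤ u c σ2 (P k) g := by
      rw [heq]
      exact Finset.le_sup' (fun l => u c σ2 (P l) g) (Finset.mem_Icc.mpr ⟨by omega, by omega⟩)
    exact ⟨(u_le_u_iff c σ2 ha hPk hPkk hg).mp h1,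
      (u_le_u_iff' c σ2 ha hPkm hPmk hg).mp h2⟩
  · rintro ⟨hg1, hg2⟩
    have hg : 0 < g := by
      have := lt_g0 c σ2 ha hPk hPkk
      have hpos : 0 < c * σ2 / P (k + 1) := div_pos ha (hPpos (k + 1) (by omega) (by omega))
      linarith
    refine ⟨hg, le_antisymm
      (Finset.le_sup' (fun l => u c σ2 (P l) g) (Finset.mem_Icc.mpr ⟨by omega, by omega⟩)) ?_⟩
    apply Finset.sup'_le
    intro l hl
    rw [Finset.mem_Icc] at hl
    rcases le_or_gt l k with hlk | hkl
    · -- chain down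
      have step : ∀ j, 1 ≤ j → j < k → u c σ2 (P j) g ≤ u c σ2 (P (j + 1)) g := by
        intro j hj hjk
        rw [u_le_u_iff' c σ2 ha (hPpos j hj (by omega)) (hmono j hj (by omega)) hg]
        refine le_trans hg2 ?_
        have := ht_mono j (k - 1) hj (by omega) (by omega)
        rwa [hk1] at this
      have chain : ∀ m : ℕ, ∀ j, j + m = k → 1 ≤ j → u c σ2 (P j) g ≤ u c σ2 (P k) g := by
        intro m
        induction m with
        | zero =>
          intro j hj _
          have hjk : j = k := by omega
          exact le_of_eq (by rw [hjk])
        | succ n ih =>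
          intro j hj h1j
          exact le_trans (step j h1j (by omega)) (ih (j + 1) (by omega) (by omega))
      exact chain (k - l) l (by omega) hl.1
    · -- chain up
      have step : ∀ j, k ≤ j → j < M → u c σ2 (P (j + 1)) g ≤ u c σ2 (P j) g := by
        intro j hj hjM
        rw [u_le_u_iff c σ2 ha (hPpos j (by omega) (by omega)) (hmono j (by omega) hjM) hg]
        exact le_trans (ht_mono k j (by omega) hj hjM) hg1
      have chain : ∀ j, k ≤ j → j ≤ M → u c σ2 (P j) g ≤ u c σ2 (P k) g := by
        intro j hj hjM
        induction j, hj using Nat.le_induction with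
        | base => exact le_refl _
        | succ n hn ih =>
          exact le_trans (step n hn (by omega)) (ih (by omega))
      exact chain l (by omega) hl.2
end
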